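/- Let d ≥ 2 and let (X_i)_{i∈ℤ^d} be an orthomartingale difference random field with respect to a commuting filtration (F_i)_{i∈ℤ^d} satisfying the sum-invariance condition. Fix n_d ≥ 1 and define, for i' = (i_1,…,i_{d−1}) ∈ ℤ^{d−1}, X'_{i'} := Σ_{i_d=1}^{n_d} X_{(i_1,…,i_{d−1},i_d)} and G_{i'} := F_{(i_1,…,i_{d−1},n_d)}. Then (X'_{i'})_{i'∈ℤ^{d−1}} is an orthomartingale difference random field with respect to the commuting filtration (G_{i'})_{i'∈ℤ^{d−1}}, and it satisfies the sum-invariance condition in dimension d−1. -/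

import Mathlib

open MeasureTheory ProbabilityTheory

/-- `(F i)_{i ∈ ℤ^d}` is a commuting filtration on `(Ω, m0, μ)`:
each `F i` is a sub-σ-algebra, `F` is monotone for the coordinatewise order, and
conditional expectations with respect to the `F i` commute in the sense that
`E[E[Y | F i] | F j] = E[Y | F (min(i,j))]` a.s. for every integrable `Y`. -/
def CommutingFiltration {Ω : Type*} [m0 : MeasurableSpace Ω] (μ : Measure Ω)
    {d : ℕ} (F : (Fin d → ℤ) → MeasurableSpace Ω) : Prop :=
  (∀ i, F i ≤ m0) ∧
  (∀ i j : Fin d → ℤ, i ≤ j → F i ≤ F j) ∧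
  (∀ Y : Ω → ℝ, Integrable Y μ → ∀ i j : Fin d → ℤ,
    μ[(μ[Y | F i]) | F j] =ᵐ[μ] μ[Y | F (fun q => min (i q) (j q))])

/-- `(X i)_{i ∈ ℤ^d}` is an orthomartingale difference random field with respect to
the commuting filtration `(F i)`: each `X i` is integrable, `F i`-measurable, and
`E[X i | F (i - e q)] = 0` a.s. for every coordinate `q`. -/
def OrthomartingaleDiff {Ω : Type*} [m0 : MeasurableSpace Ω] (μ : Measure Ω)
    {d : ℕ} (F : (Fin d → ℤ) → MeasurableSpace Ω) (X : (Fin d → ℤ) → Ω → ℝ) : Prop :=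
  (∀ i, Integrable (X i) μ) ∧
  (∀ i, StronglyMeasurable[F i] (X i)) ∧
  (∀ (i : Fin d → ℤ) (q : Fin d), μ[X i | F (i - Pi.single q 1)] =ᵐ[μ] 0)

/-- The sum-invariance condition: for every `n` and every `k ∈ ℤ^d`, the sums
`∑_{1 ≼ i ≼ n} X i` and `∑_{1 ≼ i ≼ n} X (i + k)` have the same distribution. -/
def SumInvariant {Ω : Type*} [MeasurableSpace Ω] (μ : Measure Ω)
    {d : ℕ} (X : (Fin d → ℤ) → Ω → ℝ) : Prop :=
  ∀ n k : Fin d → ℤ,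
    IdentDistrib (fun ω => ∑ i ∈ Finset.Icc 1 n, X i ω)
      (fun ω => ∑ i ∈ Finset.Icc 1 n, X (i + k) ω) μ μ

/-! Freezing the last coordinate at `n_d` gives a filtration on `ℤ^{d-1}` that still commutes,
because coordinatewise minima commute with appending a coordinate. Every summand `X_{(i', t)}`,
`t ≤ n_d`, of the blocked field is killed by conditioning on `G_{i' - e_q}`, since whenever
`j_q < i_q` the minima `min(i, j)` and `min(i - e_q, j)` agree, so that
`E[X_i | F_j] = E[X_i | F_{min(i,j)}] = E[E[X_i | F_{i - e_q}] | F_j] = 0`.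
Sum invariance passes to the blocked field because the rectangle `[1, (n', n_d)]` is the product
`[1, n'] × [1, n_d]` and the shift `(k', 0)` does not move the last coordinate. -/

namespace Fin

variable {n : ℕ} {α : Type*}

lemma snoc_le_snoc_iff [LE α] {a b : Fin n → α} {x y : α} :
    (snoc a x : Fin (n + 1) → α) ≤ snoc b y ↔ a ≤ b ∧ x ≤ y :=
  show snocOrderIso (fun _ => α) (x, a) ≤ snocOrderIso (fun _ => α) (y, b) ↔ _ from
    (OrderIso.le_iff_le _).trans (Prod.mk_le_mk.trans and_comm)

lemma min_snoc_snoc [LinearOrder α] (a b : Fin n → α) (x y : α) :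
    (fun q => min ((snoc a x : Fin (n + 1) → α) q) ((snoc b y : Fin (n + 1) → α) q))
      = (snoc (fun p => min (a p) (b p)) (min x y) : Fin (n + 1) → α) := by
  ext q
  cases q using lastCases <;> simp

lemma snoc_add_snoc [Add α] (a b : Fin n → α) (x y : α) :
    (snoc a x : Fin (n + 1) → α) + snoc b y = snoc (a + b) (x + y) := by
  ext q
  cases q using lastCases <;> simp

lemma sum_Icc_snoc {M : Type*} [AddCommMonoid M] [PartialOrder α] [DecidableEq α]
    [LocallyFiniteOrder α] (a b : Fin n → α) (x y : α) (f : (Fin (n + 1) → α) → M) :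
    ∑ i ∈ Finset.Icc (snoc a x) (snoc b y), f i
      = ∑ i ∈ Finset.Icc a b, ∑ t ∈ Finset.Icc x y, f (snoc i t) := by
  rw [← Finset.sum_product']
  refine (Finset.sum_equiv ((Equiv.prodComm _ _).trans (snocEquiv fun _ => α))
    (fun ⟨i, t⟩ => ?_) (fun _ _ => rfl)).symm
  change _ ↔ (snoc i t : Fin (n + 1) → α) ∈ _
  simp only [Finset.mem_product, Finset.mem_Icc, snoc_le_snoc_iff]
  tauto

end Fin

section

variable {Ω : Type*} {m0 : MeasurableSpace Ω} {μ : Measure Ω}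

lemma CommutingFiltration.snoc {e : ℕ} {F : (Fin (e + 1) → ℤ) → MeasurableSpace Ω}
    (hF : CommutingFiltration μ F) (c : ℤ) :
    CommutingFiltration μ (fun i => F (Fin.snoc i c)) := by
  obtain ⟨hle, hmono, hcomm⟩ := hF
  refine ⟨fun i => hle _, fun i j hij => hmono _ _ (Fin.snoc_le_snoc_iff.2 ⟨hij, le_rfl⟩),
    fun Y hY i j => ?_⟩
  simpa only [Fin.min_snoc_snoc, min_self] using hcomm Y hY (Fin.snoc i c) (Fin.snoc j c)

lemma OrthomartingaleDiff.condExp_eq_zero_of_lt [IsFiniteMeasure μ] {d : ℕ}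
    {F : (Fin d → ℤ) → MeasurableSpace Ω} {X : (Fin d → ℤ) → Ω → ℝ}
    (hF : CommutingFiltration μ F) (hX : OrthomartingaleDiff μ F X)
    {i j : Fin d → ℤ} {q : Fin d} (hq : j q < i q) : μ[X i | F j] =ᵐ[μ] 0 := by
  obtain ⟨hle, -, hcomm⟩ := hF
  obtain ⟨hint, hmeas, hdiff⟩ := hX
  have hmin : (fun p => min (i p) (j p))
      = fun p => min ((i - Pi.single q 1 : Fin d → ℤ) p) (j p) := by
    ext p
    rcases eq_or_ne p q with rfl | hp
    · simp only [Pi.sub_apply, Pi.single_eq_same]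
      omega
    · simp [hp]
  calc μ[X i | F j] = μ[μ[X i | F i] | F j] := by
        rw [condExp_of_stronglyMeasurable (hle i) (hmeas i) (hint i)]
    _ =ᵐ[μ] μ[X i | F (fun p => min (i p) (j p))] := hcomm _ (hint i) i j
    _ = μ[X i | F (fun p => min ((i - Pi.single q 1 : Fin d → ℤ) p) (j p))] := by
        rw [hmin]
    _ =ᵐ[μ] μ[μ[X i | F (i - Pi.single q 1)] | F j] := (hcomm _ (hint i) _ j).symm
    _ =ᵐ[μ] μ[0 | F j] := condExp_congr_ae (hdiff i q)
    _ = 0 := condExp_zero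

lemma OrthomartingaleDiff.sum_snoc [IsFiniteMeasure μ] {e : ℕ}
    {F : (Fin (e + 1) → ℤ) → MeasurableSpace Ω} {X : (Fin (e + 1) → ℤ) → Ω → ℝ}
    (hF : CommutingFiltration μ F) (hX : OrthomartingaleDiff μ F X)
    (s : Finset ℤ) (c : ℤ) (hs : ∀ t ∈ s, t ≤ c) :
    OrthomartingaleDiff μ (fun i => F (Fin.snoc i c))
      (fun i ω => ∑ t ∈ s, X (Fin.snoc i t) ω) := by
  refine ⟨fun i => integrable_finsetSum _ fun t _ => hX.1 _,
    fun i => s.stronglyMeasurable_fun_sum fun t ht =>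
      (hX.2.1 _).mono (hF.2.1 _ _ (Fin.snoc_le_snoc_iff.2 ⟨le_rfl, hs t ht⟩)),
    fun i q => ?_⟩
  have hterm : ∀ t ∈ s, μ[X (Fin.snoc i t) | F (Fin.snoc (i - Pi.single q 1) c)] =ᵐ[μ] 0 :=
    fun t _ => hX.condExp_eq_zero_of_lt hF (q := q.castSucc) (by simp)
  simp only [← Finset.sum_fn]
  filter_upwards [condExp_finsetSum (fun t _ => hX.1 _) _, s.eventually_all.2 hterm]
    with ω hsum hzero
  rw [hsum, Finset.sum_apply, Pi.zero_apply]
  exact Finset.sum_eq_zero hzero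

lemma SumInvariant.sum_snoc {e : ℕ} {X : (Fin (e + 1) → ℤ) → Ω → ℝ} (hX : SumInvariant μ X)
    (c : ℤ) : SumInvariant μ (fun i ω => ∑ t ∈ Finset.Icc 1 c, X (Fin.snoc i t) ω) := by
  intro n k
  have hone : (1 : Fin (e + 1) → ℤ) = Fin.snoc 1 1 := by
    ext q
    cases q using Fin.lastCases <;> simp
  have h := hX (Fin.snoc n c) (Fin.snoc k 0)
  rw [hone] at h
  simpa only [Fin.sum_Icc_snoc, Fin.snoc_add_snoc, add_zero] using h

end

theorem blocked_field_orthomartingale_general (e : ℕ)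
    {Ω : Type*} {m0 : MeasurableSpace Ω} (μ : Measure Ω) [IsProbabilityMeasure μ]
    (F : (Fin (e + 1) → ℤ) → MeasurableSpace Ω) (X : (Fin (e + 1) → ℤ) → Ω → ℝ)
    (hF : CommutingFiltration μ F) (hX : OrthomartingaleDiff μ F X)
    (hinv : SumInvariant μ X)
    (nd : ℤ)
    (X' : (Fin e → ℤ) → Ω → ℝ)
    (hX' : ∀ (i' : Fin e → ℤ) (ω : Ω), X' i' ω =
      ∑ id ∈ Finset.Icc 1 nd, X (Fin.snoc i' id) ω)
    (G : (Fin e → ℤ) → MeasurableSpace Ω)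
    (hG : ∀ i' : Fin e → ℤ, G i' = F (Fin.snoc i' nd)) :
    CommutingFiltration μ G ∧ OrthomartingaleDiff μ G X' ∧ SumInvariant μ X' := by
  obtain rfl : X' = fun i' ω => ∑ t ∈ Finset.Icc 1 nd, X (Fin.snoc i' t) ω :=
    funext fun i' => funext (hX' i')
  obtain rfl : G = fun i' => F (Fin.snoc i' nd) := funext hG
  exact ⟨hF.snoc nd, hX.sum_snoc hF _ nd fun t ht => (Finset.mem_Icc.1 ht).2, hinv.sum_snoc nd⟩

/-- Induction step: let `d = e + 1 ≥ 2`, let `(X_i)_{i∈ℤ^d}` be an orthomartingale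
difference random field with respect to a commuting filtration `(F_i)` satisfying
the sum-invariance condition, and fix `n_d ≥ 1`. Then the field
`X'_{i'} = ∑_{i_d=1}^{n_d} X_{(i',i_d)}`, `i' ∈ ℤ^{d-1}`, is an orthomartingale
difference random field with respect to the commuting filtration
`G_{i'} = F_{(i',n_d)}`, and it satisfies the sum-invariance condition in
dimension `d - 1`. -/
theorem blocked_field_orthomartingale (e : ℕ) (he : 1 ≤ e)
    {Ω : Type*} {m0 : MeasurableSpace Ω} (μ : Measure Ω) [IsProbabilityMeasure μ]
    (F : (Fin (e + 1) → ℤ) → MeasurableSpace Ω) (X : (Fin (e + 1) → ℤ) → Ω → ℝ)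
    (hF : CommutingFiltration μ F) (hX : OrthomartingaleDiff μ F X)
    (hinv : SumInvariant μ X)
    (nd : ℤ) (hnd : 1 ≤ nd)
    (X' : (Fin e → ℤ) → Ω → ℝ)
    (hX' : ∀ (i' : Fin e → ℤ) (ω : Ω), X' i' ω =
      ∑ id ∈ Finset.Icc 1 nd, X (Fin.snoc i' id) ω)
    (G : (Fin e → ℤ) → MeasurableSpace Ω)
    (hG : ∀ i' : Fin e → ℤ, G i' = F (Fin.snoc i' nd)) :
    CommutingFiltration μ G ∧ OrthomartingaleDiff μ G X' ∧ SumInvariant μ X' :=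
  blocked_field_orthomartingale_general e (m0 := m0) μ F X hF hX hinv nd X' hX' G hG
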